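/- Concentration to a Dirac delta: for every bounded continuous function f : ℂ → ℝ, ∫_{ℝ²} |Ũ(x + iy, t)|² f(x + iy) dx dy → π·f(0) as t → 0 (t ≠ 0), where Ũ(z,t) = (1/t)·exp(−i(z² + conj(z)²)/(8t))·1/(1 + |z|²/t²) is the Ozawa solution. That is, |Ũ(·,t)|² converges to π δ₀ in the sense of distributions as t → 0. -/

import Mathlib

/-
Since `z² + conj(z)²` is real, the phase factor of `Ũ` has modulus one and
`|Ũ(z,t)|² = t⁻² K(z/t)` with `K(w) = (1 + |w|²)⁻²`, the mass-preserving rescaling of a fixed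
integrable profile. Substituting `z = t w` turns the integral into `∫ K(w) f(t w) dw`, which tends
to `f(0) ∫ K = π f(0)` by dominated convergence with dominant `sup |f| · K`.
-/

open Complex Filter Topology MeasureTheory

/-- The Ozawa solution of the Davey–Stewartson II equation:
`Ũ(z,t) = (1/t)·exp(−i(z² + conj(z)²)/(8t))·1/(1 + |z|²/t²)`. -/
noncomputable def ozawaU (z : ℂ) (t : ℝ) : ℂ :=
  (1 / (t : ℂ)) *
    Complex.exp (-Complex.I * (z ^ 2 + ((starRingEnd ℂ) z) ^ 2) / (8 * (t : ℂ))) *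
    (1 / (1 + (‖z‖ : ℂ) ^ 2 / (t : ℂ) ^ 2))

open Set Module

noncomputable def rescale {E : Type*} [AddCommGroup E] [Module ℝ E]
    (K : E → ℝ) (t : ℝ) (x : E) : ℝ :=
  (|t| ^ finrank ℝ E)⁻¹ * K (t⁻¹ • x)

section Rescale

variable {E F : Type*} [NormedAddCommGroup E] [NormedSpace ℝ E] [FiniteDimensional ℝ E]
  [MeasurableSpace E] [BorelSpace E] {μ : Measure E} [μ.IsAddHaarMeasure]
  [NormedAddCommGroup F] [NormedSpace ℝ F]

theorem integral_rescale_smul (K : E → ℝ) (f : E → F) {t : ℝ} (ht : t ≠ 0) :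
    ∫ x, rescale K t x • f x ∂μ = ∫ y, K y • f (t • y) ∂μ := by
  have h := Measure.integral_comp_inv_smul μ (fun y ↦ K y • f (t • y)) t
  simp only [smul_smul, mul_inv_cancel₀ ht, one_smul, abs_pow] at h
  simp_rw [rescale, mul_smul, integral_smul, h,
    inv_smul_smul₀ (pow_ne_zero _ (abs_ne_zero.2 ht))]

theorem tendsto_integral_rescale_smul [CompleteSpace F] {K : E → ℝ} (hK : Integrable K μ)
    {f : E → F} (hf : Continuous f) (hf_bdd : ∃ C, ∀ x, ‖f x‖ ≤ C) :
    Tendsto (fun t : ℝ ↦ ∫ x, rescale K t x • f x ∂μ) (𝓝[≠] 0) (𝓝 ((∫ y, K y ∂μ) • f 0)) := by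
  obtain ⟨C, hC⟩ := hf_bdd
  have hlim : Tendsto (fun t : ℝ ↦ ∫ y, K y • f (t • y) ∂μ) (𝓝 0) (𝓝 (∫ y, K y • f 0 ∂μ)) := by
    refine tendsto_integral_filter_of_dominated_convergence (fun y ↦ C * ‖K y‖)
      (.of_forall fun t ↦ hK.aestronglyMeasurable.smul
        (hf.comp (continuous_const_smul t)).aestronglyMeasurable)
      (.of_forall fun t ↦ .of_forall fun y ↦ ?_) (hK.norm.const_mul C) (.of_forall fun y ↦ ?_)
    · rw [norm_smul, mul_comm]
      exact mul_le_mul_of_nonneg_right (hC _) (norm_nonneg _)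
    · have h : Continuous fun t : ℝ ↦ K y • f (t • y) := by fun_prop
      simpa using h.tendsto 0
  rw [integral_smul_const] at hlim
  refine (hlim.mono_left nhdsWithin_le_nhds).congr' ?_
  filter_upwards [self_mem_nhdsWithin] with t ht
  exact (integral_rescale_smul K f ht).symm

end Rescale

theorem integral_comp_add_mul_I {E : Type*} [NormedAddCommGroup E] [NormedSpace ℝ E]
    (g : ℂ → E) : ∫ p : ℝ × ℝ, g (p.1 + p.2 * I) = ∫ z, g z := by
  rw [← (volume_preserving_equiv_real_prod.symm).integral_comp
    measurableEquivRealProd.symm.measurableEmbedding]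
  simp [mk_eq_add_mul_I]

theorem integral_Ioi_mul_inv_one_add_sq_sq :
    ∫ r in Ioi (0 : ℝ), r * ((1 + r ^ 2) ^ 2)⁻¹ = 1 / 2 := by
  have hderiv (r : ℝ) :
      HasDerivAt (fun r : ℝ ↦ -(2 * (1 + r ^ 2))⁻¹) (r * ((1 + r ^ 2) ^ 2)⁻¹) r := by
    refine ((((hasDerivAt_pow 2 r).const_add 1).const_mul 2).inv (by positivity)).neg
      |>.congr_deriv ?_
    field_simp
    ring
  have hlim : Tendsto (fun r : ℝ ↦ -(2 * (1 + r ^ 2))⁻¹) atTop (𝓝 0) := by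
    have h : Tendsto (fun r : ℝ ↦ 2 * (1 + r ^ 2)) atTop atTop :=
      (tendsto_atTop_add_const_left _ 1 (tendsto_pow_atTop two_ne_zero)).const_mul_atTop two_pos
    simpa using h.inv_tendsto_atTop.neg
  rw [integral_Ioi_of_hasDerivAt_of_nonneg' (fun r _ ↦ hderiv r)
    (fun r hr ↦ mul_nonneg hr.le (by positivity)) hlim]
  norm_num

theorem integral_inv_one_add_norm_sq_sq : ∫ z : ℂ, ((1 + ‖z‖ ^ 2) ^ 2)⁻¹ = Real.pi := by
  rw [integral_fun_norm_addHaar volume (fun r ↦ ((1 + r ^ 2) ^ 2)⁻¹), finrank_real_complex]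
  norm_num [measureReal_def, integral_Ioi_mul_inv_one_add_sq_sq]
  ring

theorem norm_ozawaU (z : ℂ) (t : ℝ) : ‖ozawaU z t‖ = |t|⁻¹ * (1 + ‖z‖ ^ 2 / t ^ 2)⁻¹ := by
  have hphase : ‖exp (-I * (z ^ 2 + (starRingEnd ℂ) z ^ 2) / (8 * t))‖ = 1 := by
    rw [← map_pow, add_conj, show -I * ((2 * (z ^ 2).re : ℝ) : ℂ) / (8 * t)
      = ((-(2 * (z ^ 2).re) / (8 * t) : ℝ) : ℂ) * I by push_cast; ring]
    exact norm_exp_ofReal_mul_I _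
  have hden : (1 : ℂ) + (‖z‖ : ℂ) ^ 2 / (t : ℂ) ^ 2 = ((1 + ‖z‖ ^ 2 / t ^ 2 : ℝ) : ℂ) := by
    push_cast; ring
  rw [ozawaU, norm_mul, norm_mul, hphase, hden, one_div, one_div, norm_inv, norm_inv, norm_real,
    norm_real, Real.norm_eq_abs, Real.norm_eq_abs, abs_of_pos (a := 1 + _) (by positivity), mul_one]

theorem norm_ozawaU_sq (z : ℂ) (t : ℝ) :
    ‖ozawaU z t‖ ^ 2 = rescale (fun w : ℂ ↦ ((1 + ‖w‖ ^ 2) ^ 2)⁻¹) t z := by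
  rw [rescale, finrank_real_complex, norm_ozawaU, norm_smul, norm_inv, Real.norm_eq_abs]
  simp only [mul_pow, inv_pow, sq_abs, div_eq_inv_mul]

theorem stmt_6 (f : ℂ → ℝ) (hf_cont : Continuous f)
    (hf_bdd : ∃ C : ℝ, ∀ z : ℂ, |f z| ≤ C) :
    Tendsto
      (fun t : ℝ =>
        ∫ p : ℝ × ℝ, ‖ozawaU (p.1 + p.2 * Complex.I) t‖ ^ 2 * f (p.1 + p.2 * Complex.I))
      (𝓝[≠] 0) (𝓝 (Real.pi * f 0)) := by
  have hK := integral_inv_one_add_norm_sq_sq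
  have h := tendsto_integral_rescale_smul (μ := volume)
    (Integrable.of_integral_ne_zero (hK ▸ Real.pi_ne_zero)) hf_cont
    (by simpa only [Real.norm_eq_abs] using hf_bdd)
  rw [hK, smul_eq_mul] at h
  refine h.congr fun t ↦ ?_
  rw [integral_comp_add_mul_I (fun z ↦ ‖ozawaU z t‖ ^ 2 * f z)]
  simp only [norm_ozawaU_sq, smul_eq_mul]
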